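/- Let (|I_1|, ..., |I_K|) be a multinomial random vector with parameters n and p = (p_1,...,p_K) (i.e., |I_k| counts the number of n i.i.d. trials landing in category k). Then for any δ > 0, with probability at least 1 − δ, ∑_{k=1}^K |p_k − |I_k|/n| ≤ sqrt((2K ln 2 + 2 ln(1/δ)) / n). -/

import Mathlib

/-!
Let `p` be the law of a trial and `q` the empirical frequencies of `n` trials. Since both are
probability vectors, `∑ₖ |pₖ - qₖ| = 2 (q(A) - p(A))` for `A = {k | pₖ < qₖ}`. Hence the event
`λ < ∑ₖ |pₖ - qₖ|` lies in the union, over the `2^K` subsets `A`, of the events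
`q(A) - p(A) ≥ λ / 2`. The count of trials falling in `A` is a sum of `n` independent indicators,
so Hoeffding's inequality bounds each of these events by `exp (-n λ² / 2)`. Choosing `λ` with
`2^K exp (-n λ² / 2) = δ` gives the confidence form.
-/

open MeasureTheory Real
open scoped Classical

open ProbabilityTheory Finset

lemma sum_abs_eq_two_mul_sum_filter_pos {ι : Type*} (s : Finset ι) (f : ι → ℝ)
    (h : ∑ i ∈ s, f i = 0) : ∑ i ∈ s, |f i| = 2 * ∑ i ∈ s with 0 < f i, f i := by
  have hsplit := sum_filter_add_sum_filter_not s (fun i => 0 < f i) f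
  rw [← sum_filter_add_sum_filter_not s (fun i => 0 < f i),
    sum_congr rfl fun i hi => abs_of_pos (mem_filter.1 hi).2,
    sum_congr rfl fun i hi => abs_of_nonpos (not_lt.1 (mem_filter.1 hi).2), sum_neg_distrib]
  linarith

section Frequencies

variable {α ι : Type*} [Fintype ι] [DecidableEq α]

lemma sum_card_fiber_eq_sum_indicator (ω : ι → α) (A : Finset α) :
    ∑ k ∈ A, (#{i | ω i = k} : ℝ) = ∑ i, (A : Set α).indicator 1 (ω i) := by
  simp only [card_filter]
  push_cast
  rw [sum_comm]
  simp [Set.indicator_apply, eq_comm]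

lemma sum_card_fiber_eq_card [Fintype α] (ω : ι → α) :
    ∑ k, (#{i | ω i = k} : ℝ) = Fintype.card ι := by
  simpa using sum_card_fiber_eq_sum_indicator ω univ

variable [MeasurableSpace α] [MeasurableSingletonClass α]

lemma sum_indicator_sub_measureReal_eq (ν : Measure α) [IsFiniteMeasure ν] {n : ℕ} (hn : 0 < n)
    (ω : Fin n → α) (A : Finset α) :
    ∑ i, ((A : Set α).indicator 1 (ω i) - ν.real A) =
      n * ∑ k ∈ A, (#{i | ω i = k} / n - ν.real {k}) := by
  rw [sum_sub_distrib, sum_sub_distrib, mul_sub, ← sum_div, sum_card_fiber_eq_sum_indicator,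
    sum_measureReal_singleton]
  field_simp
  simp

lemma exists_sum_indicator_sub_eq_half_mul_sum_abs [Fintype α] (ν : Measure α)
    [IsProbabilityMeasure ν] {n : ℕ} (hn : 0 < n) (ω : Fin n → α) :
    ∃ A : Finset α, n * (∑ k, |ν.real {k} - #{i | ω i = k} / n|) / 2 =
      ∑ i, ((A : Set α).indicator 1 (ω i) - ν.real A) := by
  set f : α → ℝ := fun k => #{i | ω i = k} / n - ν.real {k}
  have hf : ∑ k, f k = 0 := by
    rw [sum_sub_distrib, ← sum_div, sum_card_fiber_eq_card, sum_measureReal_singleton]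
    simp [hn.ne']
  refine ⟨({k | 0 < f k} : Finset α), ?_⟩
  have habs : ∑ k, |ν.real {k} - #{i | ω i = k} / n| = ∑ k, |f k| :=
    sum_congr rfl fun k _ => abs_sub_comm _ _
  rw [sum_indicator_sub_measureReal_eq ν hn, habs, sum_abs_eq_two_mul_sum_filter_pos _ _ hf]
  ring

end Frequencies

lemma measureReal_sum_indicator_sub_ge_le {α ι : Type*} [MeasurableSpace α] [Fintype ι]
    (ν : Measure α) [IsProbabilityMeasure ν] {A : Set α} (hA : MeasurableSet A) {ε : ℝ}
    (hε : 0 ≤ ε) :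
    (Measure.pi fun _ : ι => ν).real
        {ω | Fintype.card ι * ε ≤ ∑ i, (A.indicator 1 (ω i) - ν.real A)} ≤
      exp (-(2 * Fintype.card ι * ε ^ 2)) := by
  set μ := Measure.pi fun _ : ι => ν
  have hsubG_indicator : HasSubgaussianMGF (fun a => A.indicator (1 : α → ℝ) a - ν.real A)
      ((‖(1 : ℝ) - 0‖₊ / 2) ^ 2) ν := by
    have h := hasSubgaussianMGF_of_mem_Icc (μ := ν) (a := 0) (b := 1)
      (measurable_one.indicator hA).aemeasurable
      (ae_of_all _ fun a => ⟨Set.indicator_nonneg (fun _ _ => zero_le_one) a,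
        Set.indicator_le_self' (fun _ _ => zero_le_one) a⟩)
    rwa [integral_indicator_one hA] at h
  have hsubG (i : ι) : HasSubgaussianMGF (fun ω : ι → α => A.indicator 1 (ω i) - ν.real A)
      ((‖(1 : ℝ) - 0‖₊ / 2) ^ 2) μ :=
    HasSubgaussianMGF.of_map (measurable_pi_apply i).aemeasurable
      (by rwa [(measurePreserving_eval (fun _ : ι => ν) i).map_eq])
  have hindep : iIndepFun (fun i (ω : ι → α) => A.indicator (1 : α → ℝ) (ω i) - ν.real A) μ :=
    iIndepFun_pi fun _ => ((measurable_one.indicator hA).sub_const _).aemeasurable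
  have h := HasSubgaussianMGF.measure_sum_ge_le_of_iIndepFun hindep (s := univ)
    (fun i _ => hsubG i) (mul_nonneg (Nat.cast_nonneg (Fintype.card ι)) hε)
  refine h.trans_eq (congrArg exp ?_)
  norm_num
  field_simp
  ring

theorem measureReal_sum_abs_sub_freq_gt_le {α : Type*} [Fintype α] [DecidableEq α]
    [MeasurableSpace α] [MeasurableSingletonClass α] (ν : Measure α) [IsProbabilityMeasure ν]
    {n : ℕ} (hn : 0 < n) {t : ℝ} (ht : 0 ≤ t) :
    (Measure.pi fun _ : Fin n => ν).real {ω | t < ∑ k, |ν.real {k} - #{i | ω i = k} / n|} ≤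
      2 ^ Fintype.card α * exp (-(n * t ^ 2 / 2)) := by
  set E : Finset α → Set (Fin n → α) := fun A =>
    {ω | n * (t / 2) ≤ ∑ i, ((A : Set α).indicator 1 (ω i) - ν.real A)}
  have hsub : {ω : Fin n → α | t < ∑ k, |ν.real {k} - #{i | ω i = k} / n|} ⊆ ⋃ A, E A := by
    intro ω hω
    obtain ⟨A, hA⟩ := exists_sum_indicator_sub_eq_half_mul_sum_abs ν hn ω
    refine Set.mem_iUnion.2 ⟨A, ?_⟩
    change t < _ at hω
    show (n : ℝ) * (t / 2) ≤ _
    rw [← hA, mul_div_assoc]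
    gcongr
  calc _ ≤ _ := measureReal_mono hsub
    _ ≤ ∑ A, (Measure.pi fun _ : Fin n => ν).real (E A) := measureReal_iUnion_fintype_le E
    _ ≤ ∑ _A : Finset α, exp (-(n * t ^ 2 / 2)) := by
      refine sum_le_sum fun A _ => ?_
      have h := measureReal_sum_indicator_sub_ge_le (ι := Fin n) ν A.measurableSet
        (by positivity : 0 ≤ t / 2)
      rw [Fintype.card_fin] at h
      exact h.trans_eq (congrArg exp (by ring))
    _ = 2 ^ Fintype.card α * exp (-(n * t ^ 2 / 2)) := by simp

/-- Bretagnolle–Huber–Carol inequality for multinomial frequencies, in confidence form. -/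
theorem stmt5 (K n : ℕ) (hn : 0 < n) (ν : Measure (Fin K)) [IsProbabilityMeasure ν]
    (δ : ℝ) (hδ : 0 < δ) :
    ENNReal.ofReal (1 - δ) ≤
      (Measure.pi fun _ : Fin n => ν) {ω : Fin n → Fin K |
        ∑ k : Fin K,
            |(ν {k}).toReal - ((Finset.univ.filter fun i : Fin n => ω i = k).card : ℝ) / n| ≤
          Real.sqrt ((2 * K * Real.log 2 + 2 * Real.log (1 / δ)) / n)} := by
  rcases le_or_gt 1 δ with hδ1 | hδ1
  · simp [ENNReal.ofReal_eq_zero.2 (sub_nonpos.2 hδ1)]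
  set t := √((2 * K * log 2 + 2 * log (1 / δ)) / n)
  have hbound : (2 : ℝ) ^ K * exp (-(n * t ^ 2 / 2)) = δ := by
    have hlog : 0 ≤ 2 * K * log 2 + 2 * log (1 / δ) := by
      have := log_nonneg (one_le_one_div hδ hδ1.le)
      positivity
    have hexp : -((2 * K * log 2 + 2 * log (1 / δ)) / 2) = log δ - log (2 ^ K) := by
      rw [one_div, log_inv, log_pow]
      ring
    rw [sq_sqrt (by positivity), mul_div_cancel₀ _ (by positivity), hexp, exp_sub, exp_log hδ,
      exp_log (by positivity)]
    field_simp
  have hbad := measureReal_sum_abs_sub_freq_gt_le ν hn (sqrt_nonneg _) (t := t)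
  rw [Fintype.card_fin, hbound] at hbad
  rw [← ofReal_measureReal]
  refine ENNReal.ofReal_le_ofReal ?_
  calc 1 - δ ≤ 1 - (Measure.pi fun _ : Fin n => ν).real _ := sub_le_sub_left hbad 1
    _ = _ := (probReal_compl_eq_one_sub (Set.toFinite _).measurableSet).symm
    _ = _ := by congr 1; ext ω; exact not_lt (α := ℝ)
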